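/- arXiv:math/0701043 — 2 statements merged into one kernel-verified Lean document; each statement's English description precedes it below -/
import Mathlib

section
/- In the intersection lattice of P_{12} = CP² # 12 CP̄² (diagonal lattice ⟨1⟩ ⊕ 12⟨-1⟩ with basis H, E_1,…,E_{12}), no integral characteristic class k satisfies all of: k² ≥ 3, k² ≡ 3 (mod 8), |k·V_i| ≤ -V_i² for i = 1,…,6, and |k·V_7| ≤ 6 - V_7², where V_1 = E_{12}-E_1, V_2 = E_{11}-E_1, V_3 = E_{10}-E_1, V_4 = E_3-E_1, V_5 = E_2-E_1, V_6 = H-3E_1, V_7 = 2F + H - E_3 - E_{10} - E_{11} - E_{12} with F = 3H - E_1 - … - E_9. -/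
/-! The intersection form has signature `(1, 12)`, so it satisfies the reverse Cauchy–Schwarz
inequality `(k·V)² ≥ k² V²` as soon as `k² > 0`. For `V = V₇` we have `V₇² = 5`, so `k² ≥ 3`
forces `(k·V₇)² ≥ 15`, while the adjunction constraint for `V₇` says `|k·V₇| ≤ 1`. -/

open Finset

/-- The intersection pairing of `P₁₂ = ℂP² # 12 ℂP̄²` in the basis
`H = e₀, E₁ = e₁, …, E₁₂ = e₁₂`: diagonal form `⟨1⟩ ⊕ 12⟨-1⟩`. -/
def ipP12 (v w : Fin 13 → ℤ) : ℤ :=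
  ∑ i : Fin 13, (if i = 0 then 1 else -1) * v i * w i

/-- Basis vector `eP12 j`. -/
def eP12 (j : Fin 13) : Fin 13 → ℤ := fun i => if i = j then 1 else 0

/-- The fiber class `F = 3H - E₁ - ⋯ - E₉`. -/
def FP12 : Fin 13 → ℤ :=
  3 • eP12 0 - eP12 1 - eP12 2 - eP12 3 - eP12 4 - eP12 5 - eP12 6 - eP12 7
    - eP12 8 - eP12 9

namespace LinearMap.BilinForm

variable {R M : Type*} [CommRing R] [LinearOrder R] [IsStrictOrderedRing R]
  [AddCommGroup M] [Module R M]

/-- The light cone lemma: reverse Cauchy–Schwarz for a symmetric form that is negative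
semidefinite on a hyperplane `ker φ`, e.g. a form of signature `(1, n)`. -/
theorem IsSymm.mul_apply_self_le_sq_of_nonpos_on_ker {B : LinearMap.BilinForm R M}
    (hB : B.IsSymm) (φ : M →ₗ[R] R) (hφ : ∀ x, φ x = 0 → B x x ≤ 0) {v : M} (hv : 0 < B v v)
    (w : M) :
    B v v * B w w ≤ B v w ^ 2 := by
  have hφv : φ v ≠ 0 := fun h => (hφ v h).not_gt hv
  -- `x := φ w • v - φ v • w` lies in `ker φ`; multiplying `B x x ≤ 0` by `B v v` and completing
  -- the square isolates the discriminant `B v w ^ 2 - B v v * B w w`.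
  have hker : B (φ w • v - φ v • w) (φ w • v - φ v • w) ≤ 0 := hφ _ (by simp [mul_comm])
  have hexpand : B (φ w • v - φ v • w) (φ w • v - φ v • w)
      = φ w ^ 2 * B v v - 2 * φ w * φ v * B v w + φ v ^ 2 * B w w := by
    simp only [map_sub, map_smul, LinearMap.sub_apply, LinearMap.smul_apply, smul_eq_mul,
      hB.eq w v]
    ring
  have hdisc : φ v ^ 2 * (B v v * B w w - B v w ^ 2) ≤ 0 := by
    have hsq : B v v * B (φ w • v - φ v • w) (φ w • v - φ v • w)
        = (φ w * B v v - φ v * B v w) ^ 2 + φ v ^ 2 * (B v v * B w w - B v w ^ 2) := by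
      rw [hexpand]; ring
    linarith [mul_nonpos_of_nonneg_of_nonpos hv.le hker, sq_nonneg (φ w * B v v - φ v * B v w)]
  exact sub_nonpos.mp (nonpos_of_mul_nonpos_right hdisc (sq_pos_of_ne_zero hφv))

end LinearMap.BilinForm

def bilinP12 : LinearMap.BilinForm ℤ (Fin 13 → ℤ) :=
  Matrix.toLinearMap₂' ℤ (Matrix.diagonal fun i : Fin 13 => if i = 0 then 1 else -1)

theorem bilinP12_apply (v w : Fin 13 → ℤ) : bilinP12 v w = ipP12 v w := by
  simp [bilinP12, Matrix.toLinearMap₂'_apply', ipP12, dotProduct, Matrix.mulVec_diagonal,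
    mul_comm]

theorem bilinP12_isSymm : bilinP12.IsSymm :=
  ⟨fun v w => by simp only [bilinP12_apply, ipP12, mul_right_comm _ (v _)]⟩

theorem ipP12_self_nonpos_of_apply_zero {x : Fin 13 → ℤ} (hx : x 0 = 0) : ipP12 x x ≤ 0 :=
  Finset.sum_nonpos fun i _ => by
    by_cases hi : i = 0
    · simp [hi, hx]
    · simpa [hi] using mul_self_nonneg (x i)

theorem mul_ipP12_self_le_sq {k : Fin 13 → ℤ} (hk : 0 < ipP12 k k) (w : Fin 13 → ℤ) :
    ipP12 k k * ipP12 w w ≤ ipP12 k w ^ 2 := by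
  simpa only [bilinP12_apply] using
    bilinP12_isSymm.mul_apply_self_le_sq_of_nonpos_on_ker (LinearMap.proj 0)
      (fun x hx => (bilinP12_apply x x).trans_le (ipP12_self_nonpos_of_apply_zero hx))
      (by rwa [bilinP12_apply]) w

theorem ipP12_V7_self :
    ipP12 (2 • FP12 + eP12 0 - eP12 3 - eP12 10 - eP12 11 - eP12 12)
      (2 • FP12 + eP12 0 - eP12 3 - eP12 10 - eP12 11 - eP12 12) = 5 := by
  decide

/-- **No basic classes for `R₆`.** In the lattice `⟨1⟩ ⊕ 12⟨-1⟩` (with basis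
`H, E₁, …, E₁₂`), there is no integral characteristic class `k` with `k² ≥ 3`,
`k² ≡ 3 (mod 8)`, satisfying the adjunction constraints `|k·Vᵢ| ≤ -Vᵢ²` for
`V₁ = E₁₂-E₁, V₂ = E₁₁-E₁, V₃ = E₁₀-E₁, V₄ = E₃-E₁, V₅ = E₂-E₁, V₆ = H-3E₁`
and `|k·V₇| ≤ 6 - V₇²` for `V₇ = 2F + H - E₃ - E₁₀ - E₁₁ - E₁₂`. -/
theorem no_basic_classes_R6 :
    ¬ ∃ k : Fin 13 → ℤ,
      (∀ x : Fin 13 → ℤ, Int.ModEq 2 (ipP12 k x) (ipP12 x x)) ∧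
      3 ≤ ipP12 k k ∧ Int.ModEq 8 (ipP12 k k) 3 ∧
      (let V1 := eP12 12 - eP12 1
       let V2 := eP12 11 - eP12 1
       let V3 := eP12 10 - eP12 1
       let V4 := eP12 3 - eP12 1
       let V5 := eP12 2 - eP12 1
       let V6 := eP12 0 - 3 • eP12 1
       let V7 := 2 • FP12 + eP12 0 - eP12 3 - eP12 10 - eP12 11 - eP12 12
       |ipP12 k V1| ≤ - ipP12 V1 V1 ∧
       |ipP12 k V2| ≤ - ipP12 V2 V2 ∧
       |ipP12 k V3| ≤ - ipP12 V3 V3 ∧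
       |ipP12 k V4| ≤ - ipP12 V4 V4 ∧
       |ipP12 k V5| ≤ - ipP12 V5 V5 ∧
       |ipP12 k V6| ≤ - ipP12 V6 V6 ∧
       |ipP12 k V7| ≤ 6 - ipP12 V7 V7) := by
  rintro ⟨k, -, hk, -, -, -, -, -, -, -, hV7⟩
  have hcone := mul_ipP12_self_le_sq (lt_of_lt_of_le three_pos hk)
    (2 • FP12 + eP12 0 - eP12 3 - eP12 10 - eP12 11 - eP12 12)
  rw [ipP12_V7_self] at hV7 hcone
  have hsq := (sq_le_one_iff_abs_le_one _).mpr (hV7.trans_eq (by norm_num))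
  linarith
end

section
/- The intersection form of the configuration C_p, given by the (p-1)×(p-1) matrix with diagonal entries (-(p+2), -2, …, -2) and off-diagonal entries 1 for adjacent indices (0 otherwise), is negative definite and has determinant ±p². -/
open Matrix Finset

private def triD (d : ℕ → ℤ) (n : ℕ) : Matrix (Fin n) (Fin n) ℤ :=
  Matrix.of fun i j =>
    if (i : ℕ) = (j : ℕ) then d i
    else if (i : ℕ) + 1 = (j : ℕ) ∨ (j : ℕ) + 1 = (i : ℕ) then 1 else 0

private lemma triD_apply (d : ℕ → ℤ) {n : ℕ} (i j : Fin n) :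
    triD d n i j =
      if (i : ℕ) = (j : ℕ) then d i
      else if (i : ℕ) + 1 = (j : ℕ) ∨ (j : ℕ) + 1 = (i : ℕ) then 1 else 0 := rfl

private lemma triD_congr (d : ℕ → ℤ) {m n : ℕ} (i j : Fin m) (i' j' : Fin n)
    (hi : (i : ℕ) = (i' : ℕ)) (hj : (j : ℕ) = (j' : ℕ)) :
    triD d m i j = triD d n i' j' := by
  rw [triD_apply, triD_apply, hi, hj]

private lemma det_triD_step (d : ℕ → ℤ) (n : ℕ) :
    (triD d (n + 2)).det =
      d (n + 1) * (triD d (n + 1)).det - (triD d n).det := by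
  have hσ : ∀ j : Fin (n + 1), (((Fin.last n).castSucc.succAbove j : Fin (n + 2)) : ℕ)
      = if (j : ℕ) < n then (j : ℕ) else (j : ℕ) + 1 := by
    intro j
    rcases lt_or_ge (j : ℕ) n with h | h
    · rw [Fin.succAbove_of_castSucc_lt _ _ (by simpa [Fin.lt_def] using h)]
      simp [h]
    · rw [Fin.succAbove_of_le_castSucc _ _ (by simpa [Fin.le_def] using h)]
      simp [Nat.not_lt.2 h]
  have hσlast : (((Fin.last n).castSucc.succAbove (Fin.last n) : Fin (n + 2)) : ℕ) = n + 1 := by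
    rw [hσ]; simp
  have hσcast : ∀ j : Fin n,
      (((Fin.last n).castSucc.succAbove j.castSucc : Fin (n + 2)) : ℕ) = (j : ℕ) := by
    intro j; rw [hσ]; simp [j.isLt]
  have hmid : ((triD d (n + 2)).submatrix Fin.castSucc
      ((Fin.last n).castSucc.succAbove)).det = (triD d n).det := by
    rw [Matrix.det_succ_column _ (Fin.last n), Fin.sum_univ_castSucc]
    have hz : ∀ i : Fin n,
        (-1 : ℤ) ^ ((i.castSucc : ℕ) + (Fin.last n : ℕ)) *
          ((triD d (n + 2)).submatrix Fin.castSucc ((Fin.last n).castSucc.succAbove))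
            i.castSucc (Fin.last n) *
          ((((triD d (n + 2)).submatrix Fin.castSucc
            ((Fin.last n).castSucc.succAbove)).submatrix i.castSucc.succAbove
            (Fin.last n).succAbove)).det = 0 := by
      intro i
      have he : ((triD d (n + 2)).submatrix Fin.castSucc ((Fin.last n).castSucc.succAbove))
          i.castSucc (Fin.last n) = 0 := by
        rw [Matrix.submatrix_apply, triD_apply, hσlast]
        have hi : (i : ℕ) < n := i.isLt
        simp only [Fin.coe_castSucc]
        rw [if_neg (by omega), if_neg (by push_neg; omega)]
      rw [he]; ring
    rw [Finset.sum_eq_zero fun i _ => hz i, zero_add]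
    have h1 : ((triD d (n + 2)).submatrix Fin.castSucc ((Fin.last n).castSucc.succAbove))
        (Fin.last n) (Fin.last n) = 1 := by
      rw [Matrix.submatrix_apply, triD_apply, hσlast]
      simp only [Fin.coe_castSucc, Fin.val_last]
      rw [if_neg (by omega)]; simp
    have h2 : (((triD d (n + 2)).submatrix Fin.castSucc
        ((Fin.last n).castSucc.succAbove)).submatrix (Fin.last n).succAbove
        (Fin.last n).succAbove) = triD d n := by
      ext i j
      simp only [Matrix.submatrix_apply, Fin.succAbove_last]
      exact triD_congr d _ _ i j (by simp) (hσcast j)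
    rw [h1, h2]
    have hpow : (-1 : ℤ) ^ ((Fin.last n : ℕ) + (Fin.last n : ℕ)) = 1 := by
      rw [Fin.val_last, ← two_mul, pow_mul]; norm_num
    rw [hpow]; ring
  rw [Matrix.det_succ_row _ (Fin.last (n + 1)), Fin.sum_univ_castSucc, Fin.sum_univ_castSucc]
  have hz : ∀ i : Fin n,
      (-1 : ℤ) ^ ((Fin.last (n + 1) : ℕ) + (i.castSucc.castSucc : ℕ)) *
        triD d (n + 2) (Fin.last (n + 1)) i.castSucc.castSucc *
        ((triD d (n + 2)).submatrix (Fin.last (n + 1)).succAbove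
          i.castSucc.castSucc.succAbove).det = 0 := by
    intro i
    have he : triD d (n + 2) (Fin.last (n + 1)) i.castSucc.castSucc = 0 := by
      rw [triD_apply]
      have hi : (i : ℕ) < n := i.isLt
      simp only [Fin.coe_castSucc, Fin.val_last]
      rw [if_neg (by omega), if_neg (by push_neg; omega)]
    rw [he]; ring
  rw [Finset.sum_eq_zero fun i _ => hz i, zero_add]
  have hml : triD d (n + 2) (Fin.last (n + 1)) (Fin.last n).castSucc = 1 := by
    rw [triD_apply]
    simp only [Fin.coe_castSucc, Fin.val_last]
    rw [if_neg (by omega)]; simp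
  have hll : triD d (n + 2) (Fin.last (n + 1)) (Fin.last (n + 1)) = d (n + 1) := by
    rw [triD_apply]
    simp [Fin.val_last]
  have hs1 : ((triD d (n + 2)).submatrix (Fin.last (n + 1)).succAbove
      (Fin.last (n + 1)).succAbove) = triD d (n + 1) := by
    ext i j
    simp only [Matrix.submatrix_apply, Fin.succAbove_last]
    exact triD_congr d _ _ i j (by simp) (by simp)
  have hs2 : ((triD d (n + 2)).submatrix (Fin.last (n + 1)).succAbove
      (Fin.last n).castSucc.succAbove).det = (triD d n).det := by
    rw [show (Fin.last (n + 1)).succAbove = Fin.castSucc from Fin.succAbove_last]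
    exact hmid
  rw [hml, hll, hs1, hs2]
  simp only [Fin.val_last, Fin.coe_castSucc]
  have e1 : (-1 : ℤ) ^ (n + 1 + n) = -(-1 : ℤ) ^ (n + 1 + (n + 1)) := by ring
  have e2 : (-1 : ℤ) ^ (n + 1 + (n + 1)) = 1 := by
    rw [show n + 1 + (n + 1) = 2 * (n + 1) by ring, pow_mul]; norm_num
  rw [e1, e2]; ring

private lemma det_triD (p : ℕ) :
    ∀ n, (triD (fun i => if i = 0 then -((p : ℤ) + 2) else -2) n).det
      = (-1) ^ n * (n * p + n + 1) := by
  intro n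
  induction n using Nat.strong_induction_on with
  | _ n ih =>
    match n with
    | 0 => simp
    | 1 =>
      rw [Matrix.det_fin_one, triD_apply]
      norm_num; ring
    | (k + 2) =>
      rw [det_triD_step, ih (k + 1) (by omega), ih k (by omega)]
      rw [if_neg (by omega)]
      push_cast
      ring

private lemma quad_sum (c : ℝ) (y : ℕ → ℝ) (m : ℕ → ℕ → ℝ)
    (hm : ∀ i j, m i j = if i = j then (if i = 0 then -(c + 2) else -2)
      else if i + 1 = j ∨ j + 1 = i then 1 else 0) :
    ∀ n, 1 ≤ n →
      ∑ i ∈ range n, ∑ j ∈ range n, y i * (m i j * y j)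
        = -((c + 1) * y 0 ^ 2 + (∑ i ∈ range (n - 1), (y i - y (i + 1)) ^ 2)
            + y (n - 1) ^ 2) := by
  intro n hn
  induction n, hn using Nat.le_induction with
  | base => simp [hm]; ring
  | succ n hn ih =>
    obtain ⟨k, rfl⟩ : ∃ k, n = k + 1 := ⟨n - 1, by omega⟩
    simp only [Nat.add_sub_cancel] at ih ⊢
    rw [Finset.sum_range_succ]
    have hinner : ∀ i ∈ range (k + 1),
        ∑ j ∈ range (k + 2), y i * (m i j * y j)
          = (∑ j ∈ range (k + 1), y i * (m i j * y j)) + y i * (m i (k + 1) * y (k + 1)) :=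
      fun i _ => Finset.sum_range_succ _ _
    rw [Finset.sum_congr rfl hinner, Finset.sum_add_distrib, ih]
    have hA : ∑ i ∈ range (k + 1), y i * (m i (k + 1) * y (k + 1))
        = y k * (1 * y (k + 1)) := by
      rw [Finset.sum_eq_single_of_mem k (self_mem_range_succ k)
        (fun i hi hik => by
          have hi' : i < k + 1 := mem_range.1 hi
          rw [hm, if_neg (by omega), if_neg (by push_neg; omega)]; ring),
        hm, if_neg (by omega), if_pos (Or.inl rfl)]
    have hB : ∑ j ∈ range (k + 2), y (k + 1) * (m (k + 1) j * y j)
        = y (k + 1) * (1 * y k) + y (k + 1) * (-2 * y (k + 1)) := by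
      rw [Finset.sum_range_succ]
      congr 1
      · rw [Finset.sum_eq_single_of_mem k (self_mem_range_succ k)
          (fun j hj hjk => by
            have hj' : j < k + 1 := mem_range.1 hj
            rw [hm, if_neg (by omega), if_neg (by push_neg; omega)]; ring),
          hm, if_neg (by omega), if_pos (Or.inr rfl)]
      · rw [hm, if_pos rfl, if_neg (by omega)]
    rw [hA, hB, Finset.sum_range_succ]
    ring

/-- **The plumbing matrix of `C_p`.** The `(p-1) × (p-1)` tridiagonal intersection
matrix of the linear plumbing `C_p`, with diagonal `(-(p+2), -2, …, -2)` and
adjacent off-diagonal entries `1`, is negative definite and has determinant of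
absolute value `p²`. -/
theorem Cp_intersection_form_negdef_det (p : ℕ) (hp : 2 ≤ p)
    (M : Matrix (Fin (p - 1)) (Fin (p - 1)) ℤ)
    (hM : ∀ i j : Fin (p - 1),
      M i j =
        if i = j then (if (i : ℕ) = 0 then -((p : ℤ) + 2) else -2)
        else if (i : ℕ) + 1 = (j : ℕ) ∨ (j : ℕ) + 1 = (i : ℕ) then 1 else 0) :
    M.det.natAbs = p ^ 2 ∧
    ∀ x : Fin (p - 1) → ℝ, x ≠ 0 →
      dotProduct x ((M.map (Int.cast : ℤ → ℝ)).mulVec x) < 0 := by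
  have hn : 1 ≤ p - 1 := by omega
  constructor
  · -- determinant
    have hM' : M = triD (fun i => if i = 0 then -((p : ℤ) + 2) else -2) (p - 1) := by
      ext i j
      rw [hM, triD_apply]
      exact if_congr Fin.ext_iff rfl rfl
    rw [hM', det_triD p (p - 1)]
    obtain ⟨q, rfl⟩ : ∃ q, p = q + 2 := ⟨p - 2, by omega⟩
    have h1 : q + 2 - 1 = q + 1 := rfl
    rw [h1, Int.natAbs_mul, Int.natAbs_pow]
    simp only [Int.natAbs_neg, Int.natAbs_one, one_pow, one_mul]
    have h2 : ((q + 1 : ℕ) : ℤ) * ((q + 2 : ℕ) : ℤ) + ((q + 1 : ℕ) : ℤ) + 1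
        = (((q + 2) ^ 2 : ℕ) : ℤ) := by push_cast; ring
    rw [h2, Int.natAbs_natCast]
  · -- negative definiteness
    intro x hx
    obtain ⟨i0, hi0⟩ := Function.ne_iff.1 hx
    set y : ℕ → ℝ := fun i => if h : i < p - 1 then x ⟨i, h⟩ else 0 with hy
    set m : ℕ → ℕ → ℝ := fun a b =>
      if a = b then (if a = 0 then -((p : ℝ) + 2) else -2)
      else if a + 1 = b ∨ b + 1 = a then 1 else 0 with hmdef
    have hm : ∀ a b, m a b = if a = b then (if a = 0 then -((p : ℝ) + 2) else -2)
        else if a + 1 = b ∨ b + 1 = a then 1 else 0 := fun _ _ => rfl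
    have hxy : ∀ i : Fin (p - 1), x i = y ↑i := by
      intro i; rw [hy]; simp only []; rw [dif_pos i.isLt]
    have hMr : ∀ i j : Fin (p - 1), (M.map (Int.cast : ℤ → ℝ)) i j = m ↑i ↑j := by
      intro i j
      rw [Matrix.map_apply, hM, hmdef]
      simp only [Fin.ext_iff]
      split_ifs <;> push_cast <;> ring
    have hQ : dotProduct x ((M.map (Int.cast : ℤ → ℝ)).mulVec x)
        = ∑ i ∈ range (p - 1), ∑ j ∈ range (p - 1), y i * (m i j * y j) := by
      rw [dotProduct]
      rw [← Fin.sum_univ_eq_sum_range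
        (fun a => ∑ j ∈ range (p - 1), y a * (m a j * y j)) (p - 1)]
      refine Finset.sum_congr rfl fun i _ => ?_
      simp only [Matrix.mulVec, dotProduct]
      rw [hxy i, ← Fin.sum_univ_eq_sum_range (fun b => y ↑i * (m ↑i b * y b)) (p - 1),
        Finset.mul_sum]
      exact Finset.sum_congr rfl fun j _ => by rw [hMr i j, hxy j]
    rw [hQ, quad_sum (p : ℝ) y m hm (p - 1) hn, neg_lt_zero]
    by_contra hA
    push_neg at hA
    have hc : (0 : ℝ) ≤ (p : ℝ) := Nat.cast_nonneg p
    have hS0 : (0 : ℝ) ≤ ∑ i ∈ range (p - 1 - 1), (y i - y (i + 1)) ^ 2 :=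
      Finset.sum_nonneg fun _ _ => sq_nonneg _
    have h00 : y 0 = 0 := by
      have h2 : y 0 ^ 2 = 0 :=
        le_antisymm (by nlinarith [sq_nonneg (y (p - 1 - 1)), sq_nonneg (y 0)]) (sq_nonneg _)
      exact pow_eq_zero_iff (two_ne_zero) |>.1 h2
    have hSz : ∑ i ∈ range (p - 1 - 1), (y i - y (i + 1)) ^ 2 = 0 :=
      le_antisymm (by nlinarith [sq_nonneg (y 0), sq_nonneg (y (p - 1 - 1))]) hS0
    have hstep : ∀ i, i < p - 1 - 1 → y (i + 1) = y i := by
      intro i hi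
      have hz := (Finset.sum_eq_zero_iff_of_nonneg
        (fun j _ => sq_nonneg (y j - y (j + 1)))).1 hSz i (mem_range.2 hi)
      have := sub_eq_zero.1 (pow_eq_zero_iff (two_ne_zero) |>.1 hz)
      linarith
    have hall : ∀ i, i < p - 1 → y i = 0 := by
      intro i
      induction i with
      | zero => exact fun _ => h00
      | succ i ih =>
        intro h
        rw [hstep i (by omega)]
        exact ih (by omega)
    exact hi0 ((hxy i0).trans (hall ↑i0 i0.isLt))
end
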